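/- arXiv:2105.14747 — 2 statements merged into one kernel-verified Lean document; each statement's English description precedes it below -/
import Mathlib

section
/- Let Ẑ_K ∈ ℝ^{K×L}, Ẑ_{K^c} ∈ ℝ^{(N-K)×L}, and x_K ∈ ℝ^K with x_K ≠ 0. Then the problem of minimizing ‖Ẑ_K − x_K hᵀ‖_F² + ‖Ẑ_{K^c} − x_{K^c} hᵀ‖_F² jointly over h ∈ ℝ^L and x_{K^c} ∈ ℝ^{N-K} is equivalent (after eliminating x_{K^c}) to maximizing over unit vectors ȟ the quadratic form ȟᵀ ( Ẑ_{K^c}ᵀ Ẑ_{K^c} + (1/‖x_K‖²) Ẑ_Kᵀ x_K x_Kᵀ Ẑ_K ) ȟ, and the optimum h is ĥ = (ȟᵀ Ẑ_Kᵀ x_K / ‖x_K‖²) ȟ where ȟ is a unit principal eigenvector of that matrix. -/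
open Matrix BigOperators Finset

/-!
Expanding, `‖Z - x hᵀ‖²_F = ‖Z‖²_F - 2 xᵀ Z h + ‖x‖² ‖h‖²`. Completing the square in the free
factor `z` gives `‖h‖² ‖Ẑ_{K^c} - z hᵀ‖² ≥ ‖h‖² ‖Ẑ_{K^c}‖² - ‖Ẑ_{K^c} h‖²`, and completing it in
the scale of `h` gives `‖x_K‖² ‖h‖² ‖Ẑ_K - x_K hᵀ‖² ≥ ‖x_K‖² ‖h‖² ‖Ẑ_K‖² - (x_Kᵀ Ẑ_K h)²`.
Adding the two, `‖h‖²` times the objective is at least `‖h‖² (‖Ẑ_K‖² + ‖Ẑ_{K^c}‖²) - hᵀ A h`, and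
`hᵀ A h ≤ (ȟᵀ A ȟ) ‖h‖²` by maximality of `ȟ` on the unit sphere. The pair `(ĥ, x̂_{K^c})` makes
both squares vanish, so it attains the bound.
-/

section RankOneFit

variable {m n p R : Type*} [Fintype m] [Fintype n] [Fintype p] [CommRing R]

def rankOneResidual (Z : Matrix m n R) (x : m → R) (h : n → R) : R :=
  ∑ i, ∑ j, (Z i j - x i * h j) ^ 2

theorem rankOneResidual_eq (Z : Matrix m n R) (x : m → R) (h : n → R) :
    rankOneResidual Z x h =
      ∑ i, ∑ j, Z i j ^ 2 - 2 * (x ⬝ᵥ Z *ᵥ h) + (∑ i, x i ^ 2) * ∑ j, h j ^ 2 := by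
  have hsq : ∀ i j, (Z i j - x i * h j) ^ 2 =
      Z i j ^ 2 - 2 * (x i * (Z i j * h j)) + x i ^ 2 * h j ^ 2 := fun i j => by ring
  rw [Fintype.sum_mul_sum]
  simp only [rankOneResidual, hsq, sum_add_distrib, sum_sub_distrib, dotProduct, mulVec, mul_sum]

theorem dotProduct_transpose_mul_self_mulVec (B : Matrix m n R) (v : n → R) :
    v ⬝ᵥ (Bᵀ * B) *ᵥ v = ∑ i, (B *ᵥ v) i ^ 2 := by
  rw [← mulVec_mulVec, dotProduct_transpose_mulVec]
  simp only [dotProduct, sq]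

theorem dotProduct_vecMulVec_self_mulVec (a v : n → R) :
    v ⬝ᵥ vecMulVec a a *ᵥ v = (v ⬝ᵥ a) ^ 2 := by
  rw [vecMulVec_mulVec, op_smul_eq_smul, dotProduct_smul, smul_eq_mul, dotProduct_comm a, sq]

theorem dotProduct_transpose_mul_self_add_smul_vecMulVec_mulVec (B : Matrix p n R)
    (C : Matrix m n R) (x : m → R) (c : R) (v : n → R) :
    v ⬝ᵥ (Bᵀ * B + c • vecMulVec (Cᵀ *ᵥ x) (Cᵀ *ᵥ x)) *ᵥ v =
      ∑ i, (B *ᵥ v) i ^ 2 + c * (x ⬝ᵥ C *ᵥ v) ^ 2 := by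
  rw [add_mulVec, dotProduct_add, smul_mulVec, dotProduct_smul, smul_eq_mul,
    dotProduct_transpose_mul_self_mulVec, dotProduct_vecMulVec_self_mulVec,
    dotProduct_transpose_mulVec]

theorem sum_sq_pos_of_ne_zero {x : n → ℝ} (hx : x ≠ 0) : 0 < ∑ i, x i ^ 2 := by
  have h0 : x ⬝ᵥ x ≠ 0 := dotProduct_self_eq_zero.not.2 hx
  simp only [dotProduct, ← sq] at h0
  exact (sum_nonneg fun i _ => sq_nonneg _).lt_of_ne' h0

theorem dotProduct_mulVec_le_mul_sum_sq {A : Matrix n n ℝ} {u : n → ℝ}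
    (hmax : ∀ v : n → ℝ, ∑ j, v j ^ 2 = 1 → v ⬝ᵥ A *ᵥ v ≤ u ⬝ᵥ A *ᵥ u) (v : n → ℝ) :
    v ⬝ᵥ A *ᵥ v ≤ (u ⬝ᵥ A *ᵥ u) * ∑ j, v j ^ 2 := by
  rcases eq_or_ne v 0 with rfl | hv
  · simp
  set S := ∑ j, v j ^ 2
  have hS : 0 < S := sum_sq_pos_of_ne_zero hv
  set s := Real.sqrt S
  have hs : s ^ 2 = S := Real.sq_sqrt hS.le
  have hunit : ∑ j, (s⁻¹ • v) j ^ 2 = 1 := by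
    simp only [Pi.smul_apply, smul_eq_mul, mul_pow, ← mul_sum, inv_pow, hs]
    exact inv_mul_cancel₀ hS.ne'
  have hscale : (s⁻¹ • v) ⬝ᵥ A *ᵥ (s⁻¹ • v) = (v ⬝ᵥ A *ᵥ v) / S := by
    rw [mulVec_smul, dotProduct_smul, smul_dotProduct, smul_eq_mul, smul_eq_mul, ← hs]
    field_simp
  exact (div_le_iff₀ hS).1 (hscale ▸ hmax _ hunit)

theorem sub_le_mul_rankOneResidual (Z : Matrix m n ℝ) (z : m → ℝ) (h : n → ℝ) :
    (∑ j, h j ^ 2) * ∑ i, ∑ j, Z i j ^ 2 - ∑ i, (Z *ᵥ h) i ^ 2 ≤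
      (∑ j, h j ^ 2) * rankOneResidual Z z h := by
  set S := ∑ j, h j ^ 2
  have hsq : 0 ≤ ∑ i, (z i * S - (Z *ᵥ h) i) ^ 2 := sum_nonneg fun i _ => sq_nonneg _
  have hexp : ∀ i, (z i * S - (Z *ᵥ h) i) ^ 2 =
      S * (z i ^ 2 * S) - S * (2 * (z i * (Z *ᵥ h) i)) + (Z *ᵥ h) i ^ 2 := fun i => by ring
  rw [rankOneResidual_eq]
  simp only [hexp, sum_add_distrib, sum_sub_distrib, ← mul_sum, ← sum_mul] at hsq
  rw [dotProduct]
  linear_combination hsq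

theorem sub_sq_le_mul_rankOneResidual (Z : Matrix m n ℝ) (x : m → ℝ) (h : n → ℝ) :
    (∑ i, x i ^ 2) * (∑ j, h j ^ 2) * ∑ i, ∑ j, Z i j ^ 2 - (x ⬝ᵥ Z *ᵥ h) ^ 2 ≤
      (∑ i, x i ^ 2) * (∑ j, h j ^ 2) * rankOneResidual Z x h := by
  rw [rankOneResidual_eq]
  linear_combination sq_nonneg ((∑ i, x i ^ 2) * (∑ j, h j ^ 2) - x ⬝ᵥ Z *ᵥ h)

theorem rankOneResidual_mulVec_div (Z : Matrix m n ℝ) {h : n → ℝ} (hh : ∑ j, h j ^ 2 ≠ 0) :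
    rankOneResidual Z (fun i => (Z *ᵥ h) i / ∑ j, h j ^ 2) h =
      ∑ i, ∑ j, Z i j ^ 2 - (∑ i, (Z *ᵥ h) i ^ 2) / ∑ j, h j ^ 2 := by
  set S := ∑ j, h j ^ 2
  have hcross : ∑ i, (Z *ᵥ h) i / S * (Z *ᵥ h) i = (∑ i, (Z *ᵥ h) i ^ 2) / S := by
    rw [sum_div]
    exact sum_congr rfl fun i _ => by ring
  have hnorm : ∑ i, ((Z *ᵥ h) i / S) ^ 2 = (∑ i, (Z *ᵥ h) i ^ 2) / S ^ 2 := by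
    simp only [div_pow, sum_div]
  rw [rankOneResidual_eq, dotProduct, hcross, hnorm]
  field_simp
  ring

theorem rankOneResidual_smul (Z : Matrix m n ℝ) {x : m → ℝ} (hx : ∑ i, x i ^ 2 ≠ 0)
    {u : n → ℝ} (hu : ∑ j, u j ^ 2 = 1) :
    rankOneResidual Z x (((u ⬝ᵥ Zᵀ *ᵥ x) / ∑ i, x i ^ 2) • u) =
      ∑ i, ∑ j, Z i j ^ 2 - (∑ i, x i ^ 2)⁻¹ * (x ⬝ᵥ Z *ᵥ u) ^ 2 := by
  rw [rankOneResidual_eq, dotProduct_transpose_mulVec, mulVec_smul, dotProduct_smul, smul_eq_mul]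
  simp only [Pi.smul_apply, smul_eq_mul, mul_pow, ← mul_sum, hu]
  field_simp
  ring

theorem sum_mulVec_smul_sq_div (Z : Matrix m n ℝ) {u : n → ℝ} (hu : ∑ j, u j ^ 2 = 1) {c : ℝ}
    (hc : c ≠ 0) :
    (∑ i, (Z *ᵥ (c • u)) i ^ 2) / ∑ j, (c • u) j ^ 2 = ∑ i, (Z *ᵥ u) i ^ 2 := by
  simp only [mulVec_smul, Pi.smul_apply, smul_eq_mul, mul_pow, ← mul_sum, hu]
  field_simp

variable {ZK : Matrix m n ℝ} {Zc : Matrix p n ℝ} {xK : m → ℝ} {A : Matrix n n ℝ}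

theorem sub_le_rankOneResidual_add_rankOneResidual (hxK : xK ≠ 0)
    (hA : ∀ v, v ⬝ᵥ A *ᵥ v =
      ∑ i, (Zc *ᵥ v) i ^ 2 + (∑ i, xK i ^ 2)⁻¹ * (xK ⬝ᵥ ZK *ᵥ v) ^ 2)
    {u : n → ℝ} (hmax : ∀ v : n → ℝ, ∑ j, v j ^ 2 = 1 → v ⬝ᵥ A *ᵥ v ≤ u ⬝ᵥ A *ᵥ u)
    (h : n → ℝ) (z : p → ℝ) :
    ∑ i, ∑ j, ZK i j ^ 2 + ∑ i, ∑ j, Zc i j ^ 2 - u ⬝ᵥ A *ᵥ u ≤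
      rankOneResidual ZK xK h + rankOneResidual Zc z h := by
  have hk := sum_sq_pos_of_ne_zero hxK
  rcases eq_or_ne h 0 with rfl | hh
  · have hmax_nonneg : 0 ≤ u ⬝ᵥ A *ᵥ u := by
      rw [hA]
      positivity
    simp only [rankOneResidual, Pi.zero_apply, mul_zero, sub_zero]
    linarith
  have hS := sum_sq_pos_of_ne_zero hh
  set k := ∑ i, xK i ^ 2
  set S := ∑ j, h j ^ 2
  have hK : S * ∑ i, ∑ j, ZK i j ^ 2 - k⁻¹ * (xK ⬝ᵥ ZK *ᵥ h) ^ 2 ≤ S * rankOneResidual ZK xK h :=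
    calc S * ∑ i, ∑ j, ZK i j ^ 2 - k⁻¹ * (xK ⬝ᵥ ZK *ᵥ h) ^ 2
        _ = k⁻¹ * (k * S * ∑ i, ∑ j, ZK i j ^ 2 - (xK ⬝ᵥ ZK *ᵥ h) ^ 2) := by field_simp
        _ ≤ k⁻¹ * (k * S * rankOneResidual ZK xK h) := by
          gcongr
          exact sub_sq_le_mul_rankOneResidual ZK xK h
        _ = S * rankOneResidual ZK xK h := by field_simp
  have hc := sub_le_mul_rankOneResidual Zc z h
  have hAh := dotProduct_mulVec_le_mul_sum_sq hmax h
  rw [hA] at hAh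
  refine le_of_mul_le_mul_left ?_ hS
  linarith

theorem rankOneResidual_add_rankOneResidual_eq (hxK : xK ≠ 0)
    (hA : ∀ v, v ⬝ᵥ A *ᵥ v =
      ∑ i, (Zc *ᵥ v) i ^ 2 + (∑ i, xK i ^ 2)⁻¹ * (xK ⬝ᵥ ZK *ᵥ v) ^ 2)
    {u : n → ℝ} (hu : ∑ j, u j ^ 2 = 1)
    (hne : ((u ⬝ᵥ ZKᵀ *ᵥ xK) / ∑ i, xK i ^ 2) • u ≠ 0) :
    let ĥ := ((u ⬝ᵥ ZKᵀ *ᵥ xK) / ∑ i, xK i ^ 2) • u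
    rankOneResidual ZK xK ĥ + rankOneResidual Zc (fun i => (Zc *ᵥ ĥ) i / ∑ j, ĥ j ^ 2) ĥ =
      ∑ i, ∑ j, ZK i j ^ 2 + ∑ i, ∑ j, Zc i j ^ 2 - u ⬝ᵥ A *ᵥ u := by
  intro ĥ
  have hc : (u ⬝ᵥ ZKᵀ *ᵥ xK) / ∑ i, xK i ^ 2 ≠ 0 := left_ne_zero_of_smul hne
  rw [rankOneResidual_smul ZK (sum_sq_pos_of_ne_zero hxK).ne' hu,
    rankOneResidual_mulVec_div Zc (sum_sq_pos_of_ne_zero hne).ne', sum_mulVec_smul_sq_div Zc hu hc,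
    hA]
  ring

end RankOneFit

theorem stmt_7 {K NK L : ℕ}
    (ZK : Matrix (Fin K) (Fin L) ℝ) (Zc : Matrix (Fin NK) (Fin L) ℝ)
    (xK : Fin K → ℝ) (hxK : xK ≠ 0)
    -- the matrix  Ẑ_{K^c}ᵀ Ẑ_{K^c} + (1/‖x_K‖²) Ẑ_Kᵀ x_K x_Kᵀ Ẑ_K
    (A : Matrix (Fin L) (Fin L) ℝ)
    (hA : A = Zcᵀ * Zc +
        (∑ i, xK i ^ 2)⁻¹ • Matrix.vecMulVec (ZKᵀ.mulVec xK) (ZKᵀ.mulVec xK))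
    -- ȟ is a unit principal eigenvector of A (maximizer of the quadratic form
    -- over unit vectors)
    (hv : Fin L → ℝ) (hunit : ∑ j, hv j ^ 2 = 1)
    (hprin : ∀ v : Fin L → ℝ, ∑ j, v j ^ 2 = 1 →
        v ⬝ᵥ A.mulVec v ≤ hv ⬝ᵥ A.mulVec hv)
    -- the optimal coefficients  ĥ = (ȟᵀ Ẑ_Kᵀ x_K / ‖x_K‖²) ȟ   and
    -- x̂_{K^c} = Ẑ_{K^c} ĥ / ‖ĥ‖²
    (hopt : Fin L → ℝ)
    (hhopt : hopt = ((hv ⬝ᵥ ZKᵀ.mulVec xK) / ∑ i, xK i ^ 2) • hv)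
    (hne : hopt ≠ 0)
    (xc : Fin NK → ℝ) (hxc : xc = fun i => Zc.mulVec hopt i / ∑ j, hopt j ^ 2) :
    -- (ĥ, x̂_{K^c}) jointly minimizes ‖Ẑ_K − x_K hᵀ‖_F² + ‖Ẑ_{K^c} − x_{K^c} hᵀ‖_F²,
    -- and the minimum value equals ‖Ẑ_K‖_F² + ‖Ẑ_{K^c}‖_F² − ȟᵀ A ȟ
    (∀ (h : Fin L → ℝ) (z : Fin NK → ℝ),
        (∑ i, ∑ j, (ZK i j - xK i * hopt j) ^ 2) +
          (∑ i, ∑ j, (Zc i j - xc i * hopt j) ^ 2) ≤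
        (∑ i, ∑ j, (ZK i j - xK i * h j) ^ 2) +
          (∑ i, ∑ j, (Zc i j - z i * h j) ^ 2)) ∧
    ((∑ i, ∑ j, (ZK i j - xK i * hopt j) ^ 2) +
        (∑ i, ∑ j, (Zc i j - xc i * hopt j) ^ 2) =
      (∑ i, ∑ j, ZK i j ^ 2) + (∑ i, ∑ j, Zc i j ^ 2) - hv ⬝ᵥ A.mulVec hv) := by
  have hquad : ∀ v, v ⬝ᵥ A *ᵥ v =
      ∑ i, (Zc *ᵥ v) i ^ 2 + (∑ i, xK i ^ 2)⁻¹ * (xK ⬝ᵥ ZK *ᵥ v) ^ 2 := fun v => by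
    rw [hA, dotProduct_transpose_mul_self_add_smul_vecMulVec_mulVec]
  subst hhopt hxc
  have hopt_value := rankOneResidual_add_rankOneResidual_eq hxK hquad hunit hne
  exact ⟨fun h z => hopt_value.le.trans
    (sub_le_rankOneResidual_add_rankOneResidual hxK hquad hprin h z), hopt_value⟩
end

section
/- For a matrix Z ∈ ℝ^{N×L} with N ≠ L (or in general rectangular), rank(Z) ≤ r if and only if there exist symmetric matrices Θ₁ ∈ ℝ^{N×N} and Θ₂ ∈ ℝ^{L×L} with rank(Θ₁) + rank(Θ₂) ≤ 2r such that the block matrix [[Θ₁, Z],[Zᵀ, Θ₂]] is positive semidefinite (semidefinite embedding lemma). -/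
/-!
A rank factorization `Z = A * B` through `ℝ^(rank Z)` exhibits `[[A Aᵀ, Z], [Zᵀ, Bᵀ B]]` as the Gram matrix of
the columns of `[Aᵀ | B]`, with both diagonal blocks of rank at most `rank Z`. Conversely a positive
semidefinite block matrix is a Gram matrix `Sᵀ S` with `S = [S₁ | S₂]`, so `Z = S₁ᵀ S₂` has rank at
most `min (rank S₁) (rank S₂) = min (rank Θ₁) (rank Θ₂)`.
-/

open Matrix BigOperators

namespace Matrix

variable {m n k : Type*}

theorem exists_eq_mul_of_rank {K : Type*} [Field K] [Fintype n] [DecidableEq n]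
    (Z : Matrix m n K) :
    ∃ (A : Matrix m (Fin Z.rank) K) (B : Matrix (Fin Z.rank) n K), Z = A * B := by
  let e := (Module.finBasisOfFinrankEq K (LinearMap.range Z.mulVecLin) (rfl : _ = Z.rank)).equivFun
  refine ⟨LinearMap.toMatrix' ((LinearMap.range Z.mulVecLin).subtype ∘ₗ e.symm.toLinearMap),
    LinearMap.toMatrix' (e.toLinearMap ∘ₗ Z.mulVecLin.rangeRestrict), ?_⟩
  apply Matrix.toLin'.injective
  refine LinearMap.ext fun v => ?_
  simp [Matrix.toLin'_mul]

theorem posSemidef_fromBlocks_gram {R : Type*} [Ring R] [PartialOrder R] [StarRing R]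
    [StarOrderedRing R] [Fintype m] [Fintype n] [Fintype k] (A : Matrix m k R) (B : Matrix k n R) :
    (fromBlocks (A * Aᴴ) (A * B) (A * B)ᴴ (Bᴴ * B)).PosSemidef := by
  have hgram : fromBlocks (A * Aᴴ) (A * B) (A * B)ᴴ (Bᴴ * B) = (fromCols Aᴴ B)ᴴ * fromCols Aᴴ B := by
    rw [conjTranspose_fromCols_eq_fromRows_conjTranspose, fromRows_mul_fromCols,
      conjTranspose_conjTranspose, conjTranspose_mul]
  rw [hgram]
  exact posSemidef_conjTranspose_mul_self _

section RCLike

open scoped ComplexOrder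

variable {𝕜 : Type*} [RCLike 𝕜] [Fintype m] [Fintype n] [DecidableEq m] [DecidableEq n]
  {A : Matrix m m 𝕜} {B : Matrix m n 𝕜} {C : Matrix n m 𝕜} {D : Matrix n n 𝕜}

theorem PosSemidef.exists_fromBlocks_eq_gram (h : (fromBlocks A B C D).PosSemidef) :
    ∃ (S₁ : Matrix (m ⊕ n) m 𝕜) (S₂ : Matrix (m ⊕ n) n 𝕜),
      A = S₁ᴴ * S₁ ∧ B = S₁ᴴ * S₂ ∧ C = S₂ᴴ * S₁ ∧ D = S₂ᴴ * S₂ := by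
  open scoped MatrixOrder in
  obtain ⟨S, hS⟩ := CStarAlgebra.nonneg_iff_eq_star_mul_self.mp h.nonneg
  refine ⟨S.toCols₁, S.toCols₂, ?_⟩
  rw [← fromCols_toCols S, star_eq_conjTranspose, conjTranspose_fromCols_eq_fromRows_conjTranspose,
    fromRows_mul_fromCols, fromBlocks_inj] at hS
  exact hS

theorem PosSemidef.rank_fromBlocks₁₂_le_rank₁₁ (h : (fromBlocks A B C D).PosSemidef) :
    B.rank ≤ A.rank := by
  obtain ⟨S₁, S₂, rfl, rfl, -, -⟩ := h.exists_fromBlocks_eq_gram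
  rw [rank_conjTranspose_mul_self, ← rank_conjTranspose S₁]
  exact rank_mul_le_left _ _

theorem PosSemidef.rank_fromBlocks₁₂_le_rank₂₂ (h : (fromBlocks A B C D).PosSemidef) :
    B.rank ≤ D.rank := by
  obtain ⟨S₁, S₂, -, rfl, -, rfl⟩ := h.exists_fromBlocks_eq_gram
  rw [rank_conjTranspose_mul_self]
  exact rank_mul_le_right _ _

end RCLike

end Matrix

theorem stmt_14 {N L : ℕ} (Z : Matrix (Fin N) (Fin L) ℝ) (r : ℕ) :
    Z.rank ≤ r ↔
      ∃ (Θ₁ : Matrix (Fin N) (Fin N) ℝ) (Θ₂ : Matrix (Fin L) (Fin L) ℝ),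
        Θ₁.IsSymm ∧ Θ₂.IsSymm ∧ Θ₁.rank + Θ₂.rank ≤ 2 * r ∧
        (Matrix.fromBlocks Θ₁ Z Zᵀ Θ₂).PosSemidef := by
  constructor
  · intro hr
    obtain ⟨A, B, hZ⟩ := exists_eq_mul_of_rank Z
    refine ⟨A * Aᵀ, Bᵀ * B, ?_, ?_, ?_, ?_⟩
    · rw [IsSymm, transpose_mul, transpose_transpose]
    · rw [IsSymm, transpose_mul, transpose_transpose]
    · have h₁ : (A * Aᵀ).rank ≤ Z.rank := (rank_mul_le_left _ _).trans (rank_le_width A)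
      have h₂ : (Bᵀ * B).rank ≤ Z.rank := (rank_mul_le_right _ _).trans (rank_le_height B)
      omega
    · simpa only [hZ, conjTranspose_eq_transpose_of_trivial] using posSemidef_fromBlocks_gram A B
  · rintro ⟨Θ₁, Θ₂, -, -, hrank, hpsd⟩
    have h₁ := hpsd.rank_fromBlocks₁₂_le_rank₁₁
    have h₂ := hpsd.rank_fromBlocks₁₂_le_rank₂₂
    omega
end
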